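/- Let P, Q : Fin n → (Fin D → ℝ) be two point configurations viewed as D×n real matrices 𝒫 and 𝒬 (columns are the points). Then 𝒫ᵀ𝒫 = 𝒬ᵀ𝒬 if and only if there exists A ∈ O(D) with A𝒫 = 𝒬. -/

import Mathlib

/-!
Equal Gram matrices say that `x ↦ P x` and `x ↦ Q x` induce the same inner products, so
`P x ↦ Q x` is a well-defined linear isometry from the column space of `P` into `ℝ^D`.
Extending it to an isometry of all of `ℝ^D` gives the orthogonal matrix `A`.
-/

open Matrix

theorem LinearMap.exists_linearIsometry_comp_eq_of_norm_eq {𝕜 V E : Type*} [RCLike 𝕜]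
    [AddCommGroup V] [Module 𝕜 V] [NormedAddCommGroup E] [InnerProductSpace 𝕜 E]
    [FiniteDimensional 𝕜 E] {f g : V →ₗ[𝕜] E} (hfg : ∀ x, ‖f x‖ = ‖g x‖) :
    ∃ M : E →ₗᵢ[𝕜] E, ∀ x, M (f x) = g x := by
  obtain ⟨s, hs⟩ := f.rangeRestrict.exists_rightInverse_of_surjective f.range_rangeRestrict
  have hfs (y : range f) : f (s y) = y := congrArg Subtype.val (LinearMap.congr_fun hs y)
  have hgs (x : V) : g (s (f.rangeRestrict x)) = g x := by
    rw [← sub_eq_zero, ← map_sub, ← norm_eq_zero, ← hfg, map_sub, hfs]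
    simp
  let L : range f →ₗᵢ[𝕜] E := ⟨g ∘ₗ s, fun y => by simp [← hfg, hfs]⟩
  exact ⟨L.extend, fun x => (L.extend_apply (f.rangeRestrict x)).trans (hgs x)⟩

theorem Matrix.inner_toEuclideanLin_toEuclideanLin {𝕜 m n : Type*} [RCLike 𝕜] [Fintype m]
    [DecidableEq m] [Fintype n] [DecidableEq n] (P : Matrix m n 𝕜) (x y : EuclideanSpace 𝕜 n) :
    inner 𝕜 (toEuclideanLin P x) (toEuclideanLin P y) =
      inner 𝕜 x (toEuclideanLin (Pᴴ * P) y) := by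
  rw [toLpLin_mul_same, LinearMap.comp_apply, toEuclideanLin_conjTranspose_eq_adjoint,
    LinearMap.adjoint_inner_right]

theorem Matrix.conjTranspose_mul_self_eq_iff_inner_eq {𝕜 m m' n : Type*} [RCLike 𝕜] [Fintype m]
    [DecidableEq m] [Fintype m'] [DecidableEq m'] [Fintype n] [DecidableEq n]
    (P : Matrix m n 𝕜) (Q : Matrix m' n 𝕜) :
    Pᴴ * P = Qᴴ * Q ↔ ∀ x y : EuclideanSpace 𝕜 n,
      inner 𝕜 (toEuclideanLin P x) (toEuclideanLin P y) =
        inner 𝕜 (toEuclideanLin Q x) (toEuclideanLin Q y) := by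
  simp only [inner_toEuclideanLin_toEuclideanLin]
  refine ⟨fun h x y => by rw [h], fun h => toEuclideanLin.injective ?_⟩
  exact LinearMap.ext fun y => ext_inner_left 𝕜 fun x => h x y

theorem gramian_iff_orthogonal (D n : ℕ) (P Q : Matrix (Fin D) (Fin n) ℝ) :
    P.transpose * P = Q.transpose * Q ↔
      ∃ A ∈ Matrix.orthogonalGroup (Fin D) ℝ, A * P = Q := by
  simp only [mem_orthogonalGroup_iff', ← conjTranspose_eq_transpose_of_trivial]
  constructor
  · intro hPQ
    have hnorm (x : EuclideanSpace ℝ (Fin n)) : ‖toEuclideanLin P x‖ = ‖toEuclideanLin Q x‖ := by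
      rw [norm_eq_sqrt_real_inner, norm_eq_sqrt_real_inner,
        (conjTranspose_mul_self_eq_iff_inner_eq P Q).1 hPQ]
    obtain ⟨M, hM⟩ := LinearMap.exists_linearIsometry_comp_eq_of_norm_eq hnorm
    refine ⟨toEuclideanLin.symm M.toLinearMap, ?_, toEuclideanLin.injective ?_⟩
    · have hA := (conjTranspose_mul_self_eq_iff_inner_eq (toEuclideanLin.symm M.toLinearMap)
        (1 : Matrix (Fin D) (Fin D) ℝ)).2 (by simp)
      simpa using hA
    · ext x : 1
      simp [hM]
  · rintro ⟨A, hA, rfl⟩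
    rw [conjTranspose_mul, Matrix.mul_assoc, ← Matrix.mul_assoc Aᴴ, hA, Matrix.one_mul]
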